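/- arXiv:2002.07208 — 4 statements merged into one kernel-verified Lean document; each statement's English description precedes it below -/
import Mathlib

section
/- Let w ≥ 1 and let ‖·‖ denote the ℓ∞ operator norm on w×w real matrices. Let A, B be w×w real matrices with ‖A‖ ≤ 1 and ‖B‖ ≤ 1, let k be a natural number and let 0 < γ < 1. Suppose for every 0 ≤ i ≤ k, A_i and B_i are w×w real matrices with ‖A_i − A‖ ≤ γ^{i+1} and ‖B_i − B‖ ≤ γ^{i+1}. Then ‖(Σ_{i=0}^{k} A_i B_{k−i} − Σ_{i=0}^{k−1} A_i B_{k−1−i}) − A·B‖ ≤ (k+2)·γ^{k+1} + (k+1)·γ^{k+2}. -/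
attribute [local instance] Matrix.linftyOpNormedRing

/-- If `‖A‖ ≤ 1`, `‖B‖ ≤ 1` (ℓ∞ operator norm), `0 < γ < 1`, and for all
`0 ≤ i ≤ k` the matrices `Ai i`, `Bi i` satisfy `‖Ai i − A‖ ≤ γ^(i+1)` and
`‖Bi i − B‖ ≤ γ^(i+1)`, then the combination
`Σ_{i=0}^{k} Ai i * Bi (k−i) − Σ_{i=0}^{k−1} Ai i * Bi (k−1−i)` is a
`((k+2)γ^(k+1) + (k+1)γ^(k+2))`-approximation of `A*B`. -/
theorem stmt_0 (w : ℕ) (hw : 1 ≤ w)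
    (A B : Matrix (Fin w) (Fin w) ℝ) (hA : ‖A‖ ≤ 1) (hB : ‖B‖ ≤ 1)
    (k : ℕ) (γ : ℝ) (hγ0 : 0 < γ) (hγ1 : γ < 1)
    (Ai Bi : ℕ → Matrix (Fin w) (Fin w) ℝ)
    (hAi : ∀ i ≤ k, ‖Ai i - A‖ ≤ γ ^ (i + 1))
    (hBi : ∀ i ≤ k, ‖Bi i - B‖ ≤ γ ^ (i + 1)) :
    ‖(∑ i ∈ Finset.range (k + 1), Ai i * Bi (k - i)
        - ∑ i ∈ Finset.range k, Ai i * Bi (k - 1 - i)) - A * B‖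
      ≤ (k + 2) * γ ^ (k + 1) + (k + 1) * γ ^ (k + 2) := by
  have key : (∑ i ∈ Finset.range (k + 1), Ai i * Bi (k - i)
        - ∑ i ∈ Finset.range k, Ai i * Bi (k - 1 - i)) - A * B
      = (Ai k - A) * B + A * (Bi k - B)
        + (∑ i ∈ Finset.range (k + 1), (Ai i - A) * (Bi (k - i) - B))
        - ∑ i ∈ Finset.range k, (Ai i - A) * (Bi (k - 1 - i) - B) := by
    have expand : ∀ (X Y : Matrix (Fin w) (Fin w) ℝ),
        (X - A) * (Y - B) = X * Y - X * B - A * Y + A * B := by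
      intro X Y; noncomm_ring
    simp only [expand, sub_mul, mul_sub, Finset.sum_add_distrib, Finset.sum_sub_distrib,
      Finset.sum_const, Finset.card_range]
    have h1 : ∑ i ∈ Finset.range (k + 1), Ai i * B
        = (∑ i ∈ Finset.range k, Ai i * B) + Ai k * B :=
      Finset.sum_range_succ _ k
    have h2 : ∑ i ∈ Finset.range (k + 1), A * Bi (k - i)
        = (∑ i ∈ Finset.range k, A * Bi (k - 1 - i)) + A * Bi k := by
      rw [Finset.sum_range_succ' (fun i => A * Bi (k - i)) k]
      congr 1
      apply Finset.sum_congr rfl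
      intro i _
      have : k - (i + 1) = k - 1 - i := by omega
      rw [this]
    rw [h1, h2, succ_nsmul (A * B) k]
    abel
  rw [key]
  have γpos : ∀ n : ℕ, (0:ℝ) ≤ γ ^ n := fun n => (pow_pos hγ0 n).le
  have t1 : ‖(Ai k - A) * B‖ ≤ γ ^ (k + 1) := by
    calc ‖(Ai k - A) * B‖ ≤ ‖Ai k - A‖ * ‖B‖ := norm_mul_le _ _
      _ ≤ γ ^ (k + 1) * 1 := by
          apply mul_le_mul (hAi k le_rfl) hB (norm_nonneg _) (γpos _)
      _ = γ ^ (k + 1) := mul_one _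
  have t2 : ‖A * (Bi k - B)‖ ≤ γ ^ (k + 1) := by
    calc ‖A * (Bi k - B)‖ ≤ ‖A‖ * ‖Bi k - B‖ := norm_mul_le _ _
      _ ≤ 1 * γ ^ (k + 1) := by
          apply mul_le_mul hA (hBi k le_rfl) (norm_nonneg _) zero_le_one
      _ = γ ^ (k + 1) := one_mul _
  have t3 : ‖∑ i ∈ Finset.range (k + 1), (Ai i - A) * (Bi (k - i) - B)‖
      ≤ (k + 1) * γ ^ (k + 2) := by
    calc ‖∑ i ∈ Finset.range (k + 1), (Ai i - A) * (Bi (k - i) - B)‖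
        ≤ ∑ i ∈ Finset.range (k + 1), ‖(Ai i - A) * (Bi (k - i) - B)‖ :=
          norm_sum_le _ _
      _ ≤ ∑ i ∈ Finset.range (k + 1), γ ^ (k + 2) := by
          apply Finset.sum_le_sum
          intro i hi
          rw [Finset.mem_range] at hi
          have hik : i ≤ k := by omega
          calc ‖(Ai i - A) * (Bi (k - i) - B)‖
              ≤ ‖Ai i - A‖ * ‖Bi (k - i) - B‖ := norm_mul_le _ _
            _ ≤ γ ^ (i + 1) * γ ^ (k - i + 1) :=
                mul_le_mul (hAi i hik) (hBi (k - i) (by omega))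
                  (norm_nonneg _) (γpos _)
            _ = γ ^ (k + 2) := by rw [← pow_add]; congr 1; omega
      _ = (k + 1) * γ ^ (k + 2) := by
          rw [Finset.sum_const, Finset.card_range, nsmul_eq_mul]
          push_cast; ring
  have t4 : ‖∑ i ∈ Finset.range k, (Ai i - A) * (Bi (k - 1 - i) - B)‖
      ≤ k * γ ^ (k + 1) := by
    calc ‖∑ i ∈ Finset.range k, (Ai i - A) * (Bi (k - 1 - i) - B)‖
        ≤ ∑ i ∈ Finset.range k, ‖(Ai i - A) * (Bi (k - 1 - i) - B)‖ :=
          norm_sum_le _ _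
      _ ≤ ∑ i ∈ Finset.range k, γ ^ (k + 1) := by
          apply Finset.sum_le_sum
          intro i hi
          rw [Finset.mem_range] at hi
          calc ‖(Ai i - A) * (Bi (k - 1 - i) - B)‖
              ≤ ‖Ai i - A‖ * ‖Bi (k - 1 - i) - B‖ := norm_mul_le _ _
            _ ≤ γ ^ (i + 1) * γ ^ (k - 1 - i + 1) :=
                mul_le_mul (hAi i (by omega)) (hBi (k - 1 - i) (by omega))
                  (norm_nonneg _) (γpos _)
            _ = γ ^ (k + 1) := by rw [← pow_add]; congr 1; omega
      _ = k * γ ^ (k + 1) := by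
          rw [Finset.sum_const, Finset.card_range, nsmul_eq_mul]
  calc ‖(Ai k - A) * B + A * (Bi k - B)
        + (∑ i ∈ Finset.range (k + 1), (Ai i - A) * (Bi (k - i) - B))
        - ∑ i ∈ Finset.range k, (Ai i - A) * (Bi (k - 1 - i) - B)‖
      ≤ ‖(Ai k - A) * B + A * (Bi k - B)
        + (∑ i ∈ Finset.range (k + 1), (Ai i - A) * (Bi (k - i) - B))‖
        + ‖∑ i ∈ Finset.range k, (Ai i - A) * (Bi (k - 1 - i) - B)‖ :=
        norm_sub_le _ _
    _ ≤ (‖(Ai k - A) * B‖ + ‖A * (Bi k - B)‖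
        + ‖∑ i ∈ Finset.range (k + 1), (Ai i - A) * (Bi (k - i) - B)‖)
        + ‖∑ i ∈ Finset.range k, (Ai i - A) * (Bi (k - 1 - i) - B)‖ := by
        gcongr
        exact (norm_add_le _ _).trans (by gcongr; exact norm_add_le _ _)
    _ ≤ (γ ^ (k + 1) + γ ^ (k + 1) + (k + 1) * γ ^ (k + 2)) + k * γ ^ (k + 1) := by
        gcongr
    _ = (k + 2) * γ ^ (k + 1) + (k + 1) * γ ^ (k + 2) := by push_cast; ring
end

section
/- Let 𝒜 : {0,1}^m → ℝ^{w×w} be any function into w×w real matrices and let g : {0,1}^n × {0,1}^d → {0,1}^m be an (ε,δ)-averaging sampler. Then with probability at least 1 − w²·δ over a uniform x ∈ {0,1}^n, ‖E_{s∈{0,1}^d}[𝒜(g(x,s))] − ⟨𝒜⟩‖ ≤ 2·w·μ(𝒜)·ε. -/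
attribute [local instance] Matrix.linftyOpNormedRing

/-- The uniform average `E_{t∈T}[f t]` over a finite type `T`. -/
noncomputable def expectation {T : Type*} [Fintype T] (f : T → ℝ) : ℝ :=
  (∑ t, f t) / (Fintype.card T : ℝ)

/-- The uniform average `⟨𝒜⟩ = E_{t∈T}[𝒜 t]` of a matrix-valued function. -/
noncomputable def mexpect {T : Type*} [Fintype T] {w : ℕ}
    (A : T → Matrix (Fin w) (Fin w) ℝ) : Matrix (Fin w) (Fin w) ℝ :=
  (Fintype.card T : ℝ)⁻¹ • ∑ t, A t

/-- The weight `μ(𝒜) = max_{t∈T} ‖𝒜 t‖` (ℓ∞ operator norm). -/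
noncomputable def weight {T : Type*} [Fintype T] [Nonempty T] {w : ℕ}
    (A : T → Matrix (Fin w) (Fin w) ℝ) : ℝ :=
  Finset.univ.sup' Finset.univ_nonempty (fun t => ‖A t‖)

/-- `g : X × S → T` is an `(ε,δ)`-averaging sampler. -/
def IsAvgSampler {X S T : Type*} [Fintype X] [Fintype S] [Fintype T]
    (ε δ : ℝ) (g : X → S → T) : Prop :=
  ∀ f : T → ℝ, (∀ t, f t ∈ Set.Icc (0 : ℝ) 1) →
    (1 - δ) * (Fintype.card X : ℝ) ≤
      ((Finset.univ.filter fun x : X =>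
        |expectation (fun s => f (g x s)) - expectation f| ≤ ε).card : ℝ)

/-! Each entry `t ↦ 𝒜 t i j` takes values in `[-μ, μ]` with `μ = μ(𝒜)`, so its affine rescaling
to `[0, 1]` is a test function for the sampler: outside a `δ`-fraction of seeds `x`, the sampled
average of entry `(i, j)` is within `2με` of its true average. A union bound over the `w²` entries
leaves a `(1 - w²δ)`-fraction of seeds on which all entries are that close, and a `w × w` matrix
with entries bounded by `c` has ℓ∞ operator norm at most `w c`. -/

open Finset
open scoped BigOperators

namespace Matrix

attribute [local instance] Matrix.linftyOpSeminormedAddCommGroup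

variable {m n α : Type*} [Fintype m] [Fintype n] [SeminormedAddCommGroup α]

theorem norm_entry_le_linfty_opNorm (A : Matrix m n α) (i : m) (j : n) : ‖A i j‖ ≤ ‖A‖ := by
  rw [linfty_opNorm_def, ← coe_nnnorm, NNReal.coe_le_coe]
  exact (single_le_sum (fun k _ => zero_le) (mem_univ j)).trans
    (le_sup (f := fun i => ∑ j, ‖A i j‖₊) (mem_univ i))

theorem linfty_opNorm_le_card_mul {A : Matrix m n α} {c : ℝ} (hc : 0 ≤ c)
    (h : ∀ i j, ‖A i j‖ ≤ c) : ‖A‖ ≤ Fintype.card n * c := by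
  lift c to NNReal using hc
  rw [linfty_opNorm_def, ← NNReal.coe_natCast, ← NNReal.coe_mul, NNReal.coe_le_coe]
  refine Finset.sup_le fun i _ => ?_
  calc ∑ j, ‖A i j‖₊ ≤ ∑ _j : n, c := sum_le_sum fun j _ => h i j
    _ = Fintype.card n * c := by simp

theorem linfty_opNorm_le_card_mul' {A : Matrix n n α} {c : ℝ}
    (h : ∀ i j, ‖A i j‖ ≤ c) : ‖A‖ ≤ Fintype.card n * c := by
  cases isEmpty_or_nonempty n with
  | inl => simp [Subsingleton.elim A 0]
  | inr hn =>
    obtain ⟨i⟩ := hn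
    exact linfty_opNorm_le_card_mul ((norm_nonneg _).trans (h i i)) h

end Matrix

section Averages

variable {T : Type*} [Fintype T]

theorem expectation_eq_expect (f : T → ℝ) : expectation f = 𝔼 t, f t := by
  rw [expectation, expect_eq_sum_div_card, card_univ]

theorem expectation_mul_add [Nonempty T] (a b : ℝ) (f : T → ℝ) :
    expectation (fun t => a * f t + b) = a * expectation f + b := by
  simp only [expectation_eq_expect, expect_add_distrib, ← mul_expect, Fintype.expect_const]

theorem mexpect_apply {w : ℕ} (A : T → Matrix (Fin w) (Fin w) ℝ) (i j : Fin w) :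
    mexpect A i j = expectation (fun t => A t i j) := by
  simp [mexpect, expectation, Matrix.sum_apply, div_eq_inv_mul]

theorem norm_le_weight [Nonempty T] {w : ℕ} (A : T → Matrix (Fin w) (Fin w) ℝ) (t : T) :
    ‖A t‖ ≤ weight A :=
  le_sup' (fun t => ‖A t‖) (mem_univ t)

end Averages

theorem IsAvgSampler.one_sub_mul_card_le_of_abs_le {X S T : Type*} [Fintype X] [Fintype S]
    [Fintype T] [Nonempty S] [Nonempty T] {ε δ : ℝ} {g : X → S → T} (hg : IsAvgSampler ε δ g)
    {f : T → ℝ} {M : ℝ} (hf : ∀ t, |f t| ≤ M) :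
    (1 - δ) * (Fintype.card X : ℝ) ≤
      (#{x | |expectation (fun s => f (g x s)) - expectation f| ≤ 2 * M * ε} : ℝ) := by
  have hM : 0 ≤ M := (abs_nonneg _).trans (hf (Classical.arbitrary T))
  set f' : T → ℝ := fun t => (f t + M) / (2 * M)
  have hf' : ∀ t, f' t ∈ Set.Icc (0 : ℝ) 1 := fun t => by
    obtain ⟨hl, hu⟩ := abs_le.mp (hf t)
    exact ⟨div_nonneg (by linarith) (by positivity),
      div_le_one_of_le₀ (by linarith) (by positivity)⟩
  have hrepr : f = fun t => 2 * M * f' t - M := by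
    funext t
    -- for `M = 0` both sides vanish: `f = 0` and `f' = 0` since `x / 0 = 0`
    rcases hM.eq_or_lt with rfl | hM
    · simpa using hf t
    · simp only [f']; field_simp; ring
  refine (hg f' hf').trans (Nat.cast_le.mpr (card_le_card (monotone_filter_right _ ?_)))
  intro x _ hx
  calc |expectation (fun s => f (g x s)) - expectation f|
      = |2 * M| * |expectation (fun s => f' (g x s)) - expectation f'| := by
        rw [hrepr, ← abs_mul]
        simp only [sub_eq_add_neg, expectation_mul_add]
        ring_nf
    _ ≤ 2 * M * ε := by
        rw [abs_of_nonneg (by positivity)]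
        exact mul_le_mul_of_nonneg_left hx (by positivity)

theorem one_sub_card_mul_le_card_filter_forall {X K : Type*} [Fintype X] [Fintype K]
    {P : K → X → Prop} [∀ k, DecidablePred (P k)] {δ : ℝ}
    (h : ∀ k, (1 - δ) * (Fintype.card X : ℝ) ≤ (#{x | P k x} : ℝ)) :
    (1 - Fintype.card K * δ) * (Fintype.card X : ℝ) ≤ (#{x | ∀ k, P k x} : ℝ) := by
  have hcompl : ∀ (p : X → Prop) [DecidablePred p],
      (#{x | p x} : ℝ) = Fintype.card X - #{x | ¬ p x} := fun p _ => by
    rw [eq_sub_iff_add_eq, ← Nat.cast_add, card_filter_add_card_filter_not, card_univ]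
  have hbad : (#{x | ¬ ∀ k, P k x} : ℝ) ≤ ∑ k, (#{x | ¬ P k x} : ℝ) := by
    classical
    have hunion : ({x | ¬ ∀ k, P k x} : Finset X) = univ.biUnion fun k => {x | ¬ P k x} := by
      ext; simp
    exact_mod_cast hunion ▸ card_biUnion_le
  have hk : ∀ k, (#{x | ¬ P k x} : ℝ) ≤ δ * Fintype.card X := fun k => by
    linarith [h k, hcompl (P k)]
  calc (1 - Fintype.card K * δ) * (Fintype.card X : ℝ)
      = Fintype.card X - ∑ _k : K, δ * Fintype.card X := by
        rw [sum_const, card_univ, nsmul_eq_mul]; ring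
    _ ≤ Fintype.card X - ∑ k, (#{x | ¬ P k x} : ℝ) := by gcongr with k; exact hk k
    _ ≤ Fintype.card X - #{x | ¬ ∀ k, P k x} := by linarith
    _ = #{x | ∀ k, P k x} := (hcompl _).symm

/-- For any matrix-valued `𝒜 : {0,1}^m → ℝ^{w×w}` and `(ε,δ)`-averaging
sampler `g`, with probability at least `1 − w²δ` over uniform `x`,
`‖E_s[𝒜(g(x,s))] − ⟨𝒜⟩‖ ≤ 2·w·μ(𝒜)·ε`. -/
theorem stmt_4 {n d m w : ℕ} (ε δ : ℝ)
    (𝒜 : (Fin m → Bool) → Matrix (Fin w) (Fin w) ℝ)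
    (g : (Fin n → Bool) → (Fin d → Bool) → (Fin m → Bool))
    (hg : IsAvgSampler ε δ g) :
    (1 - (w : ℝ) ^ 2 * δ) * (Fintype.card (Fin n → Bool) : ℝ) ≤
      ((Finset.univ.filter fun x : Fin n → Bool =>
        ‖mexpect (fun s => 𝒜 (g x s)) - mexpect 𝒜‖ ≤ 2 * w * weight 𝒜 * ε).card : ℝ) := by
  have hentry : ∀ t i j, |𝒜 t i j| ≤ weight 𝒜 := fun t i j =>
    (Matrix.norm_entry_le_linfty_opNorm (𝒜 t) i j).trans (norm_le_weight 𝒜 t)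
  have hunion := one_sub_card_mul_le_card_filter_forall fun p : Fin w × Fin w =>
    hg.one_sub_mul_card_le_of_abs_le (f := fun t => 𝒜 t p.1 p.2) (hentry · p.1 p.2)
  rw [Fintype.card_prod, Fintype.card_fin, Nat.cast_mul, ← sq] at hunion
  refine hunion.trans (Nat.cast_le.mpr (card_le_card (monotone_filter_right _ fun x _ hx => ?_)))
  calc ‖mexpect (fun s => 𝒜 (g x s)) - mexpect 𝒜‖
      ≤ Fintype.card (Fin w) * (2 * weight 𝒜 * ε) :=
        Matrix.linfty_opNorm_le_card_mul' fun i j => by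
          simpa [Real.norm_eq_abs, mexpect_apply] using hx (i, j)
    _ = 2 * w * weight 𝒜 * ε := by rw [Fintype.card_fin]; ring
end

section
/- Let d ≥ 1 be an integer and, for a real number x and an integer y with 0 ≤ y ≤ 2^d − 1, define Snap_d(x, y) := max(⌊x·2^d − 2^{−d}·y⌋·2^{−d}, 0). Then for all real numbers a, b, the fraction of integers y ∈ {0, 1, …, 2^d − 1} for which Snap_d(a, y) ≠ Snap_d(b, y) is at most 2^d·|a − b| + 2^{−d}; equivalently, Pr_{y}[Snap_d(a,y) ≠ Snap_d(b,y)] ≤ 2^d·|a − b| + 2^{−d} for y uniform in {0, …, 2^d − 1}. -/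
/-!
For a fixed shift `y`, the floors `⌊aN - y/N⌋` and `⌊bN - y/N⌋` (with `N = 2^d`, `a ≤ b`)
differ only if some integer `k` satisfies `aN - y/N < k ≤ bN - y/N`, i.e. `aN² < kN + y ≤ bN²`.
Since `0 ≤ y < N`, the integer `kN + y` determines `y`, so the bad shifts inject into the
integers of `(aN², bN²]`, of which there are at most `N²(b - a) + 1`.
-/

/-- The randomized rounding ('snap') operation of the Saks–Zhou scheme:
`Snap_d(x, y) = max(⌊x·2^d − 2^{−d}·y⌋·2^{−d}, 0)`. -/
noncomputable def snap (d : ℕ) (x : ℝ) (y : ℕ) : ℝ :=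
  max ((⌊x * 2 ^ d - (2 : ℝ) ^ (-(d : ℤ)) * y⌋ : ℝ) * (2 : ℝ) ^ (-(d : ℤ))) 0

lemma card_Ioc_floor_le {x y : ℝ} (h : x ≤ y) :
    ((Finset.Ioc ⌊x⌋ ⌊y⌋).card : ℝ) ≤ y - x + 1 := by
  rw [Int.card_Ioc, ← Int.cast_natCast, Int.toNat_of_nonneg (sub_nonneg.2 (Int.floor_mono h))]
  push_cast
  linarith [Int.floor_le y, Int.lt_floor_add_one x]

lemma card_filter_floor_sub_ne_le (N : ℕ) {u v : ℝ} (huv : u ≤ v) :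
    (((Finset.range N).filter fun y : ℕ => ⌊u - y / N⌋ ≠ ⌊v - y / N⌋).card : ℝ)
      ≤ N * (v - u) + 1 := by
  rcases N.eq_zero_or_pos with rfl | hN
  · simp
  have hN' : (0 : ℝ) < N := by exact_mod_cast hN
  let code : ℕ → ℤ := fun y => y + (⌊u - y / N⌋ + 1) * N
  calc _ ≤ ((Finset.Ioc ⌊u * N⌋ ⌊v * N⌋).card : ℝ) := by
        gcongr
        refine Finset.card_le_card_of_injOn code (fun y hy => ?_) (fun y hy y' hy' h => ?_)
        · simp only [Finset.coe_filter, Finset.mem_range, Set.mem_ofPred_eq] at hy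
          have hlt : ⌊u - y / N⌋ < ⌊v - y / N⌋ :=
            lt_of_le_of_ne (Int.floor_mono (by linarith)) hy.2
          have hu := Int.lt_floor_add_one (u - y / N)
          have hv := Int.floor_le (v - y / N)
          have hk : ((⌊u - y / N⌋ + 1 : ℤ) : ℝ) ≤ ⌊v - y / N⌋ := by exact_mod_cast hlt
          rw [Finset.mem_coe, Finset.mem_Ioc, Int.floor_lt, Int.le_floor]
          simp only [code]
          push_cast at hk ⊢
          constructor
          · have := mul_lt_mul_of_pos_right hu hN'
            rw [sub_mul, div_mul_cancel₀ _ hN'.ne'] at this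
            linarith
          · have := mul_le_mul_of_nonneg_right (hk.trans hv) hN'.le
            rw [sub_mul, div_mul_cancel₀ _ hN'.ne'] at this
            linarith
        · simp only [Finset.coe_filter, Finset.mem_range, Set.mem_ofPred_eq] at hy hy'
          have := congrArg (· % (N : ℤ)) h
          simp only [code, Int.add_mul_emod_self_right] at this
          rwa [Int.emod_eq_of_lt (by positivity) (by exact_mod_cast hy.1),
            Int.emod_eq_of_lt (by positivity) (by exact_mod_cast hy'.1), Nat.cast_inj] at this
    _ ≤ v * N - u * N + 1 := card_Ioc_floor_le (by gcongr)
    _ = N * (v - u) + 1 := by ring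

lemma snap_eq_of_floor_eq {d : ℕ} {x x' : ℝ} {y : ℕ}
    (h : ⌊x * 2 ^ d - y / 2 ^ d⌋ = ⌊x' * 2 ^ d - y / 2 ^ d⌋) : snap d x y = snap d x' y := by
  simp only [snap, zpow_neg, zpow_natCast, ← div_eq_inv_mul, h]

theorem stmt_13_general (d : ℕ) (a b : ℝ) :
    (((Finset.range (2 ^ d)).filter fun y => snap d a y ≠ snap d b y).card : ℝ)
      ≤ ((2 : ℝ) ^ d * |a - b| + (2 : ℝ) ^ (-(d : ℤ))) * 2 ^ d := by
  wlog hab : a ≤ b generalizing a b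
  · simpa only [ne_comm, abs_sub_comm] using this b a (le_of_not_ge hab)
  calc _ ≤ (((Finset.range (2 ^ d)).filter fun y : ℕ =>
          ⌊a * 2 ^ d - y / 2 ^ d⌋ ≠ ⌊b * 2 ^ d - y / 2 ^ d⌋).card : ℝ) := by
        gcongr with y
        exact snap_eq_of_floor_eq
    _ ≤ 2 ^ d * (b * 2 ^ d - a * 2 ^ d) + 1 := by
        exact_mod_cast card_filter_floor_sub_ne_le (2 ^ d) (by gcongr)
    _ = ((2 : ℝ) ^ d * |a - b| + (2 : ℝ) ^ (-(d : ℤ))) * 2 ^ d := by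
        rw [abs_sub_comm, abs_of_nonneg (sub_nonneg.2 hab), zpow_neg, zpow_natCast]
        field_simp

/-- For all reals `a, b`, the fraction of `y ∈ {0,…,2^d−1}` with
`Snap_d(a,y) ≠ Snap_d(b,y)` is at most `2^d·|a−b| + 2^{−d}`; stated here as a bound
on the number of such `y` against `(2^d·|a−b| + 2^{−d})·2^d`. -/
theorem stmt_13 (d : ℕ) (hd : 1 ≤ d) (a b : ℝ) :
    (((Finset.range (2 ^ d)).filter fun y => snap d a y ≠ snap d b y).card : ℝ)
      ≤ ((2 : ℝ) ^ d * |a - b| + (2 : ℝ) ^ (-(d : ℤ))) * 2 ^ d :=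
  stmt_13_general d a b
end

section
/- Let d ≥ 1 and w ≥ 1 be integers and let M, M' be w×w real matrices with max_{i,j}|M_{i,j} − M'_{i,j}| ≤ ε. Define Snap_d entrywise: Snap_d(M, y) is the matrix whose (i,j) entry is max(⌊M_{i,j}·2^d − 2^{−d}·y⌋·2^{−d}, 0), where the same integer y is used for all entries. Then for y uniform in {0, 1, …, 2^d − 1}, Pr_y[Snap_d(M, y) ≠ Snap_d(M', y)] ≤ w²·(2^d·ε + 2^{−d}). -/
/-- `Snap_d` applied entrywise to a matrix, with a common random offset `y`. -/
noncomputable def snapM {w : ℕ} (d : ℕ) (M : Matrix (Fin w) (Fin w) ℝ) (y : ℕ) :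
    Matrix (Fin w) (Fin w) ℝ :=
  Matrix.of fun i j => snap d (M i j) y

lemma snap_core (d : ℕ) (ε : ℝ) (a b : ℝ) (hab : a ≤ b) (h : b - a ≤ ε) :
    (((Finset.range (2 ^ d)).filter fun y => snap d a y ≠ snap d b y).card : ℝ)
      ≤ (2 : ℝ) ^ d * ε * 2 ^ d + 1 := by
  classical
  have hc : (2 : ℝ) ^ (-(d : ℤ)) * 2 ^ d = 1 := by
    rw [zpow_neg, zpow_natCast]
    exact inv_mul_cancel₀ (by positivity)
  set c : ℝ := (2 : ℝ) ^ (-(d : ℤ)) with hc'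
  have hcpos : 0 < c := by positivity
  have hP : (0 : ℝ) < 2 ^ d := by positivity
  set f : ℕ → ℤ := fun y => ⌊b * 2 ^ d - c * y⌋ * 2 ^ d + y with hf
  have hmaps : ∀ y ∈ (Finset.range (2 ^ d)).filter fun y => snap d a y ≠ snap d b y,
      f y ∈ Finset.Ioc ⌊a * 2 ^ d * 2 ^ d⌋ ⌊b * 2 ^ d * 2 ^ d⌋ := by
    intro y hy
    simp only [Finset.mem_filter, Finset.mem_range] at hy
    have hne : ⌊a * 2 ^ d - c * y⌋ ≠ ⌊b * 2 ^ d - c * y⌋ := by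
      intro hEq
      apply hy.2
      simp only [snap, ← hc']
      rw [hEq]
    have hle : ⌊a * 2 ^ d - c * y⌋ ≤ ⌊b * 2 ^ d - c * y⌋ :=
      Int.floor_le_floor (by nlinarith)
    have hlt : ⌊a * 2 ^ d - c * y⌋ < ⌊b * 2 ^ d - c * y⌋ := lt_of_le_of_ne hle hne
    set n : ℤ := ⌊b * 2 ^ d - c * y⌋ with hn
    have h1 : (n : ℝ) ≤ b * 2 ^ d - c * y := Int.floor_le _
    have h2 : a * 2 ^ d - c * y < (n : ℝ) := by
      have hlt' : (⌊a * 2 ^ d - c * y⌋ : ℝ) + 1 ≤ (n : ℝ) := by exact_mod_cast hlt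
      linarith [Int.lt_floor_add_one (a * 2 ^ d - c * y)]
    have hcast : ((f y : ℤ) : ℝ) = (n : ℝ) * 2 ^ d + y := by
      simp [hf, hn]
    have h1' : (n : ℝ) * 2 ^ d ≤ (b * 2 ^ d - c * y) * 2 ^ d :=
      mul_le_mul_of_nonneg_right h1 hP.le
    have h2' : (a * 2 ^ d - c * y) * 2 ^ d < (n : ℝ) * 2 ^ d :=
      mul_lt_mul_of_pos_right h2 hP
    have he : ∀ t : ℝ, (t * 2 ^ d - c * y) * 2 ^ d = t * 2 ^ d * 2 ^ d - (c * 2 ^ d) * y := by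
      intro t; ring
    rw [he, hc] at h1' h2'
    simp only [Finset.mem_Ioc]
    constructor
    · rw [Int.floor_lt, hcast]; linarith
    · rw [Int.le_floor, hcast]; linarith
  have hinj : Set.InjOn f ((Finset.range (2 ^ d)).filter fun y => snap d a y ≠ snap d b y) := by
    intro y hy y' hy' hEq
    simp only [Finset.coe_filter, Set.mem_setOf_eq, Finset.mem_range] at hy hy'
    have hmod : ∀ z : ℕ, z < 2 ^ d → (f z) % (2 ^ d : ℤ) = z := by
      intro z hz
      have hz' : f z = (z : ℤ) + (2 ^ d : ℤ) * ⌊b * 2 ^ d - c * z⌋ := by ring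
      rw [hz', Int.add_mul_emod_self_left,
        Int.emod_eq_of_lt (by positivity) (by exact_mod_cast hz)]
    have := (hmod y hy.1).symm.trans (by rw [hEq, hmod y' hy'.1])
    exact_mod_cast this
  have hcard := Finset.card_le_card_of_injOn f hmaps hinj
  have hIoc : (Finset.Ioc ⌊a * 2 ^ d * 2 ^ d⌋ ⌊b * 2 ^ d * 2 ^ d⌋).card
      = (⌊b * 2 ^ d * 2 ^ d⌋ - ⌊a * 2 ^ d * 2 ^ d⌋).toNat := Int.card_Ioc _ _
  have hfl : (⌊b * 2 ^ d * 2 ^ d⌋ : ℝ) - (⌊a * 2 ^ d * 2 ^ d⌋ : ℝ)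
      ≤ b * 2 ^ d * 2 ^ d - a * 2 ^ d * 2 ^ d + 1 := by
    have := Int.floor_le (b * 2 ^ d * 2 ^ d)
    have := Int.lt_floor_add_one (a * 2 ^ d * 2 ^ d)
    linarith
  have hab' : a * 2 ^ d * 2 ^ d ≤ b * 2 ^ d * 2 ^ d := by
    have := mul_le_mul_of_nonneg_right
      (mul_le_mul_of_nonneg_right hab hP.le) hP.le
    linarith
  have hnn : ⌊a * 2 ^ d * 2 ^ d⌋ ≤ ⌊b * 2 ^ d * 2 ^ d⌋ := Int.floor_le_floor hab'
  have hmul : b * 2 ^ d * 2 ^ d - a * 2 ^ d * 2 ^ d ≤ 2 ^ d * ε * 2 ^ d := by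
    nlinarith [mul_le_mul_of_nonneg_right h (mul_pos hP hP).le]
  calc (((Finset.range (2 ^ d)).filter fun y => snap d a y ≠ snap d b y).card : ℝ)
      ≤ ((⌊b * 2 ^ d * 2 ^ d⌋ - ⌊a * 2 ^ d * 2 ^ d⌋).toNat : ℝ) := by
        exact_mod_cast hIoc ▸ hcard
    _ = (⌊b * 2 ^ d * 2 ^ d⌋ : ℝ) - (⌊a * 2 ^ d * 2 ^ d⌋ : ℝ) := by
        rw [← Int.cast_natCast, Int.toNat_of_nonneg (by omega)]; push_cast; ring
    _ ≤ (2 : ℝ) ^ d * ε * 2 ^ d + 1 := by linarith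

lemma snap_entry (d : ℕ) (ε : ℝ) (x x' : ℝ) (h : |x - x'| ≤ ε) :
    (((Finset.range (2 ^ d)).filter fun y => snap d x y ≠ snap d x' y).card : ℝ)
      ≤ (2 : ℝ) ^ d * ε * 2 ^ d + 1 := by
  rcases le_total x x' with hle | hle
  · exact snap_core d ε x x' hle (by rw [abs_sub_comm] at h; linarith [le_abs_self (x' - x)])
  · have := snap_core d ε x' x hle (by linarith [le_abs_self (x - x')])
    simpa [ne_comm] using this


/-- If `max_{i,j} |M_{i,j} − M'_{i,j}| ≤ ε`, then for `y` uniform in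
`{0,…,2^d−1}`, `Pr_y[Snap_d(M,y) ≠ Snap_d(M',y)] ≤ w²·(2^d·ε + 2^{−d})`; stated here as a
bound on the number of such `y` against `w²·(2^d·ε + 2^{−d})·2^d`. -/
theorem stmt_14 (d w : ℕ) (hd : 1 ≤ d) (hw : 1 ≤ w) (ε : ℝ)
    (M M' : Matrix (Fin w) (Fin w) ℝ)
    (hMM' : ∀ i j, |M i j - M' i j| ≤ ε) :
    (((Finset.range (2 ^ d)).filter fun y => snapM d M y ≠ snapM d M' y).card : ℝ)
      ≤ (w : ℝ) ^ 2 * ((2 : ℝ) ^ d * ε + (2 : ℝ) ^ (-(d : ℤ))) * 2 ^ d := by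
  classical
  have hc : (2 : ℝ) ^ (-(d : ℤ)) * 2 ^ d = 1 := by
    rw [zpow_neg, zpow_natCast]
    exact inv_mul_cancel₀ (by positivity)
  have hsub : ((Finset.range (2 ^ d)).filter fun y => snapM d M y ≠ snapM d M' y)
      ⊆ (Finset.univ : Finset (Fin w × Fin w)).biUnion fun p =>
        (Finset.range (2 ^ d)).filter fun y => snap d (M p.1 p.2) y ≠ snap d (M' p.1 p.2) y := by
    intro y hy
    simp only [Finset.mem_filter, Finset.mem_range] at hy
    have : ∃ p : Fin w × Fin w, snap d (M p.1 p.2) y ≠ snap d (M' p.1 p.2) y := by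
      by_contra hcon
      push_neg at hcon
      exact hy.2 (Matrix.ext fun i j => hcon (i, j))
    obtain ⟨p, hp⟩ := this
    exact Finset.mem_biUnion.2 ⟨p, Finset.mem_univ _,
      Finset.mem_filter.2 ⟨Finset.mem_range.2 hy.1, hp⟩⟩
  have h1 := Finset.card_le_card hsub
  have h2 := Finset.card_biUnion_le (s := (Finset.univ : Finset (Fin w × Fin w)))
    (t := fun p => (Finset.range (2 ^ d)).filter fun y =>
      snap d (M p.1 p.2) y ≠ snap d (M' p.1 p.2) y)
  have h3 : (((Finset.range (2 ^ d)).filter fun y => snapM d M y ≠ snapM d M' y).card : ℝ)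
      ≤ ∑ p : Fin w × Fin w, (((Finset.range (2 ^ d)).filter fun y =>
        snap d (M p.1 p.2) y ≠ snap d (M' p.1 p.2) y).card : ℝ) := by
    push_cast
    exact_mod_cast le_trans (Nat.cast_le.2 h1) (Nat.cast_le.2 h2)
  have h4 : ∑ p : Fin w × Fin w, (((Finset.range (2 ^ d)).filter fun y =>
        snap d (M p.1 p.2) y ≠ snap d (M' p.1 p.2) y).card : ℝ)
      ≤ ∑ _p : Fin w × Fin w, ((2 : ℝ) ^ d * ε * 2 ^ d + 1) :=
    Finset.sum_le_sum fun p _ => snap_entry d ε _ _ (hMM' p.1 p.2)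
  have h5 : ∑ _p : Fin w × Fin w, ((2 : ℝ) ^ d * ε * 2 ^ d + 1)
      = (w : ℝ) ^ 2 * ((2 : ℝ) ^ d * ε * 2 ^ d + 1) := by
    rw [Finset.sum_const, Finset.card_univ]
    simp [Fintype.card_prod]
    ring
  have : (w : ℝ) ^ 2 * ((2 : ℝ) ^ d * ε * 2 ^ d + 1)
      = (w : ℝ) ^ 2 * ((2 : ℝ) ^ d * ε + (2 : ℝ) ^ (-(d : ℤ))) * 2 ^ d := by
    linear_combination (-(w : ℝ) ^ 2) * hc
  linarith [h3, h4, h5.le, this.le]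
end
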